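/- arXiv:1105.3114 — 2 statements merged into one kernel-verified Lean document; each statement's English description precedes it below -/
import Mathlib

section
/- If a category A has all small colimits and every continuous presheaf on A (i.e. functor A^op → Set sending colimits in A to limits in Set) is representable, then A has all small limits. -/
open CategoryTheory Limits

universe v u

section

variable {J K C D : Type*} [Category J] [Category K] [Category C] [Category D]

/-- `limit G ≅ G.flip ⋙ lim`, and `lim` preserves limits as a right adjoint. -/
lemma preservesLimitsOfShape_limit [HasLimitsOfShape J D] (G : J ⥤ C ⥤ D)
    [∀ j, PreservesLimitsOfShape K (G.obj j)] : PreservesLimitsOfShape K (limit G) := by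
  have : PreservesLimitsOfShape K G.flip :=
    preservesLimitsOfShape_of_evaluation _ _ fun j =>
      preservesLimitsOfShape_of_natIso (flipCompEvaluation G j).symm
  exact preservesLimitsOfShape_of_natIso (limitIsoFlipCompLim G).symm

lemma hasLimit_of_isRepresentable_limit_comp_yoneda {A : Type u} [Category.{v} A] (F : J ⥤ A)
    [HasLimit (F ⋙ yoneda)] [(limit (F ⋙ yoneda)).IsRepresentable] : HasLimit F :=
  have := createsLimitOfFullyFaithfulOfIso _ (limit (F ⋙ yoneda)).reprW
  hasLimit_of_created F yoneda

end

theorem stmt0_general {A : Type u} [Category.{v} A]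
    (h : ∀ F : Aᵒᵖ ⥤ Type v, PreservesLimits F → F.IsRepresentable) :
    HasLimits A := by
  refine ⟨fun J _ => ⟨fun F => ?_⟩⟩
  have : ∀ j, PreservesLimits ((F ⋙ yoneda).obj j) := fun j =>
    inferInstanceAs (PreservesLimits (yoneda.obj (F.obj j)))
  have : (limit (F ⋙ yoneda)).IsRepresentable := h _ ⟨preservesLimitsOfShape_limit _⟩
  exact hasLimit_of_isRepresentable_limit_comp_yoneda F

/-- If a category `A` has all small colimits and every continuous presheaf on `A`
(i.e. functor `Aᵒᵖ ⥤ Type` sending colimits in `A` to limits in `Set`, equivalently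
preserving limits of `Aᵒᵖ`) is representable, then `A` has all small limits. -/
theorem stmt0 {A : Type u} [Category.{v} A] [HasColimits A]
    (h : ∀ F : Aᵒᵖ ⥤ Type v, PreservesLimits F → F.IsRepresentable) :
    HasLimits A :=
  stmt0_general h
end

section
/- Every cocontinuous functor F : Set → Set with F(1) ≅ 1 and F(X × Y) ≅ F(X) × F(Y) is naturally isomorphic to the identity functor. -/
open CategoryTheory Limits

universe u

/-- A cocone exhibiting `X` as the coproduct of `X` copies of a one-point type `T`. -/
def ptCocone (X : Type u) (T : Type u) : Cocone (Discrete.functor fun _ : X => T) where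
  pt := X
  ι := Discrete.natTrans fun x => TypeCat.ofHom fun _ => x.as

def ptCoconeIsColimit (X : Type u) (T : Type u) [Unique T] :
    IsColimit (ptCocone X T) where
  desc s := TypeCat.ofHom fun x => s.ι.app ⟨x⟩ (default : T)
  fac s x := by
    ext t
    exact congrArg (s.ι.app x) (Subsingleton.elim (α := T) default t)
  uniq s m hm := by
    ext x
    exact types_congr_hom (hm ⟨x⟩) (default : T)

/-- `Set` is 2-terminal among `⊗`-vectoids: every cocontinuous endofunctor of `Set`
preserving finite products (in particular the terminal object `1` and binary products
`F(X × Y) ≅ F(X) × F(Y)`) is naturally isomorphic to the identity functor. -/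
theorem stmt8 (F : Type u ⥤ Type u) [PreservesColimits F]
    [PreservesFiniteProducts F] :
    Nonempty (F ≅ 𝟭 (Type u)) := by
  -- F preserves the terminal object, so F PUnit is a singleton
  have hT : IsTerminal (F.obj PUnit) :=
    (Types.isTerminalPunit).isTerminalObj F PUnit
  have : Unique (F.obj PUnit) := by
    have e : F.obj PUnit ≅ PUnit := hT.uniqueUpToIso Types.isTerminalPunit
    exact Equiv.unique (Iso.toEquiv e)
  set e₀ : F.obj PUnit := default with he₀
  -- the natural transformation 𝟭 ⟶ F
  let α : 𝟭 (Type u) ⟶ F :=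
    { app := fun X => TypeCat.ofHom fun x => F.map (TypeCat.ofHom fun _ : PUnit => x) e₀
      naturality := fun X Y f => by
        ext x
        simp only [Functor.id_map, types_comp_apply]
        change F.map (TypeCat.ofHom fun _ : PUnit => f x) e₀ = F.map f (F.map (TypeCat.ofHom fun _ : PUnit => x) e₀)
        rw [← types_comp_apply (F.map _) (F.map f), ← F.map_comp]
        rfl }
  -- each component is an iso
  haveI : ∀ X : Type u, IsIso (α.app X) := by
    intro X
    have hc : IsColimit (F.mapCocone (ptCocone X PUnit)) :=
      isColimitOfPreserves F (ptCoconeIsColimit X PUnit)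
    -- another colimit cocone on the same diagram with apex X
    let c₂ : Cocone (Discrete.functor (fun _ : X => PUnit.{u+1}) ⋙ F) :=
      { pt := X
        ι := Discrete.natTrans fun x => TypeCat.ofHom fun _ : F.obj PUnit => x.as }
    have hc₂ : IsColimit c₂ :=
      { desc := fun s => TypeCat.ofHom fun x => s.ι.app ⟨x⟩ e₀
        fac := fun s x => by
          ext t
          exact congrArg (s.ι.app x) (Subsingleton.elim (α := F.obj PUnit) e₀ t)
        uniq := fun s m hm => by
          ext x
          exact types_congr_hom (hm ⟨x⟩) e₀ }
    have key : α.app X = (hc₂.coconePointUniqueUpToIso hc).hom := by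
      ext x
      have := types_congr_hom (hc₂.comp_coconePointUniqueUpToIso_hom hc ⟨x⟩) e₀
      exact this.symm
    rw [key]
    exact Iso.isIso_hom _
  haveI : IsIso α := NatIso.isIso_of_isIso_app α
  exact ⟨(asIso α).symm⟩
end
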